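/- Let S be a finite (nonempty) set and c ∈ (0,1). The operator F mapping a pseudometric d on S to F(d)(s_i,s_j) = (1−c)|R^π_{s_i} − R^π_{s_j}| + c·W₁(d)(P^π_{s_i}, P^π_{s_j}) is a contraction with Lipschitz constant c with respect to the sup-norm on the space of bounded pseudometrics on S × S, and hence has a unique fixed point. -/

import Mathlib

open Finset Matrix

/-- Aggregated (on-policy) reward: `Rπ s = ∑ a, π(a|s) R(s,a)`. -/
noncomputable def Rpi {S A : Type*} [Fintype A]
    (π : S → A → ℝ) (R : S → A → ℝ) (s : S) : ℝ :=
  ∑ a, π s a * R s a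

/-- Aggregated (on-policy) transition kernel: `Pπ(s'|s) = ∑ a, π(a|s) P(s'|s,a)`. -/
noncomputable def Ppi {S A : Type*} [Fintype A]
    (π : S → A → ℝ) (P : S → A → S → ℝ) (s s' : S) : ℝ :=
  ∑ a, π s a * P s a s'

/-- Value function of a finite MDP under a stationary policy, written explicitly as
`V^π_γ(s) = ∑_{t≥0} γ^t · (Pπ^t Rπ)(s)`, i.e. the expected discounted sum of rewards. -/
noncomputable def Vval {S : Type*} [Fintype S] [DecidableEq S]
    (Pm : Matrix S S ℝ) (Rv : S → ℝ) (γ : ℝ) (s : S) : ℝ :=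
  ∑' t : ℕ, γ ^ t * ((Pm ^ t) *ᵥ Rv) s

/-- A coupling of two probability vectors `μ`, `ν` on a finite set. -/
def IsCoupling {S : Type*} [Fintype S] (μ ν : S → ℝ) (l : S → S → ℝ) : Prop :=
  (∀ x y, 0 ≤ l x y) ∧ (∀ x, ∑ y, l x y = μ x) ∧ (∀ y, ∑ x, l x y = ν y)

/-- 1-Wasserstein (optimal transport) distance between probability vectors on a
finite set, with ground cost `d`. -/
noncomputable def W1 {S : Type*} [Fintype S] (d : S → S → ℝ) (μ ν : S → ℝ) : ℝ :=
  sInf {c : ℝ | ∃ l : S → S → ℝ, IsCoupling μ ν l ∧ c = ∑ x, ∑ y, l x y * d x y}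

/-- A pseudometric on `S` (as a real-valued function of two variables). -/
def IsPseudometric {S : Type*} (d : S → S → ℝ) : Prop :=
  (∀ x, d x x = 0) ∧ (∀ x y, d x y = d y x) ∧ (∀ x y z, d x z ≤ d x y + d y z)

/-- The operator on pseudometrics whose (least) fixed point is the `c`-weighted
on-policy bisimulation metric:
`F(d)(sᵢ,sⱼ) = (1-c)|R^π_{sᵢ} - R^π_{sⱼ}| + c · W₁(d)(P^π_{sᵢ}, P^π_{sⱼ})`. -/
noncomputable def bisimOp {S A : Type*} [Fintype S] [Fintype A]
    (π : S → A → ℝ) (R : S → A → ℝ) (P : S → A → S → ℝ) (c : ℝ)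
    (d : S → S → ℝ) (si sj : S) : ℝ :=
  (1 - c) * |Rpi π R si - Rpi π R sj| + c * W1 d (Ppi π P si) (Ppi π P sj)

/-!
Under a fixed coupling of probability vectors, changing the cost by at most `K` changes the
transport cost by at most `K`; so `W₁` is `1`-Lipschitz in its cost and `F` is `c`-Lipschitz.
`F` preserves pseudometrics: `W₁(d)` vanishes on the diagonal coupling, is symmetric under
transposing couplings, and satisfies the triangle inequality because couplings of `(μ, ν)` and
`(ν, ρ)` glue along `ν` into a coupling of `(μ, ρ)` costing at most their sum. Pseudometrics form
a closed, hence complete, subset of the sup-normed space `S → S → ℝ`, on which Banach's fixed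
point theorem applies.
-/

open Function Set

theorem existsUnique_isFixedPt_of_lipschitzOnWith {α : Type*} [MetricSpace α] {s : Set α}
    {f : α → α} {K : NNReal} (hK : K < 1) (hsc : IsComplete s) (hne : s.Nonempty)
    (hsf : MapsTo f s s) (hf : LipschitzOnWith K f s) :
    ∃! x, x ∈ s ∧ IsFixedPt f x := by
  have hcontr : ContractingWith K (hsf.restrict f s s) := ⟨hK, hf.mapsToRestrict hsf⟩
  obtain ⟨x₀, hx₀⟩ := hne
  obtain ⟨x, hxs, hx, -⟩ :=
    ContractingWith.exists_fixedPoint' hsc hsf hcontr hx₀ (edist_ne_top _ _)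
  refine ⟨x, ⟨hxs, hx⟩, fun y ⟨hys, hy⟩ => ?_⟩
  exact congrArg Subtype.val <|
    hcontr.fixedPoint_unique' (x := ⟨y, hys⟩) (y := ⟨x, hxs⟩) (Subtype.ext hy) (Subtype.ext hx)

section Coupling

variable {S : Type*} [Fintype S] {μ ν ρ : S → ℝ} {l l₁ l₂ d d' : S → S → ℝ}

def transportCost (l d : S → S → ℝ) : ℝ :=
  ∑ x, ∑ y, l x y * d x y

theorem transportCost_nonneg (hl : ∀ x y, 0 ≤ l x y) (hd : ∀ x y, 0 ≤ d x y) :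
    0 ≤ transportCost l d :=
  sum_nonneg fun x _ => sum_nonneg fun y _ => mul_nonneg (hl x y) (hd x y)

theorem transportCost_mono (hl : ∀ x y, 0 ≤ l x y) (hd : ∀ x y, d x y ≤ d' x y) :
    transportCost l d ≤ transportCost l d' :=
  sum_le_sum fun x _ => sum_le_sum fun y _ => mul_le_mul_of_nonneg_left (hd x y) (hl x y)

theorem transportCost_swap (hd : ∀ x y, d x y = d y x) :
    transportCost (fun x y => l y x) d = transportCost l d := by
  rw [transportCost, sum_comm]
  simp only [transportCost, hd]

theorem isCoupling_prod (hμ0 : ∀ x, 0 ≤ μ x) (hμ1 : ∑ x, μ x = 1)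
    (hν0 : ∀ y, 0 ≤ ν y) (hν1 : ∑ y, ν y = 1) :
    IsCoupling μ ν fun x y => μ x * ν y :=
  ⟨fun x y => mul_nonneg (hμ0 x) (hν0 y), fun x => by rw [← mul_sum, hν1, mul_one],
    fun y => by rw [← sum_mul, hμ1, one_mul]⟩

theorem isCoupling_diag [DecidableEq S] (hμ0 : ∀ x, 0 ≤ μ x) :
    IsCoupling μ μ fun x y => if x = y then μ x else 0 :=
  ⟨fun x y => by dsimp only; split_ifs <;> simp [hμ0 x], fun x => by simp, fun y => by simp⟩

theorem transportCost_diag [DecidableEq S] (hd : ∀ x, d x x = 0) :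
    transportCost (fun x y => if x = y then μ x else 0) d = 0 := by
  simp [transportCost, ite_mul, hd]

-- Where `ν y = 0` the division returns `0`, which is also the value of `l₁ x y` there.
noncomputable def gluedPlan (l₁ l₂ : S → S → ℝ) (ν : S → ℝ) (x y z : S) : ℝ :=
  l₁ x y * l₂ y z / ν y

namespace IsCoupling

theorem symm (hl : IsCoupling μ ν l) : IsCoupling ν μ fun x y => l y x :=
  ⟨fun x y => hl.1 y x, hl.2.2, hl.2.1⟩

theorem right_nonneg (hl : IsCoupling μ ν l) (y : S) : 0 ≤ ν y :=
  hl.2.2 y ▸ sum_nonneg fun x _ => hl.1 x y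

theorem eq_zero_of_right_eq_zero (hl : IsCoupling μ ν l) {y : S} (hy : ν y = 0) (x : S) :
    l x y = 0 :=
  (sum_eq_zero_iff_of_nonneg fun x _ => hl.1 x y).1 (hl.2.2 y ▸ hy) x (mem_univ x)

theorem eq_zero_of_left_eq_zero (hl : IsCoupling μ ν l) {x : S} (hx : μ x = 0) (y : S) :
    l x y = 0 :=
  (sum_eq_zero_iff_of_nonneg fun y _ => hl.1 x y).1 (hl.2.1 x ▸ hx) y (mem_univ y)

theorem transportCost_add_const (hl : IsCoupling μ ν l) (hμ1 : ∑ x, μ x = 1) (K : ℝ) :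
    transportCost l (fun x y => d x y + K) = transportCost l d + K := by
  simp only [transportCost, mul_add, sum_add_distrib, ← sum_mul, hl.2.1, hμ1, one_mul]

theorem gluedPlan_nonneg (h₁ : IsCoupling μ ν l₁) (h₂ : IsCoupling ν ρ l₂) (x y z : S) :
    0 ≤ gluedPlan l₁ l₂ ν x y z :=
  div_nonneg (mul_nonneg (h₁.1 x y) (h₂.1 y z)) (h₁.right_nonneg y)

theorem sum_gluedPlan_right (h₁ : IsCoupling μ ν l₁) (h₂ : IsCoupling ν ρ l₂) (x y : S) :
    ∑ z, gluedPlan l₁ l₂ ν x y z = l₁ x y := by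
  rcases eq_or_ne (ν y) 0 with hy | hy
  · simp [gluedPlan, hy, h₁.eq_zero_of_right_eq_zero hy]
  · simp only [gluedPlan, ← sum_div, ← mul_sum, h₂.2.1 y, mul_div_cancel_right₀ _ hy]

theorem sum_gluedPlan_left (h₁ : IsCoupling μ ν l₁) (h₂ : IsCoupling ν ρ l₂) (y z : S) :
    ∑ x, gluedPlan l₁ l₂ ν x y z = l₂ y z := by
  rcases eq_or_ne (ν y) 0 with hy | hy
  · simp [gluedPlan, hy, h₂.eq_zero_of_left_eq_zero hy]
  · simp only [gluedPlan, ← sum_div, ← sum_mul, h₁.2.2 y, mul_div_cancel_left₀ _ hy]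

theorem comp (h₁ : IsCoupling μ ν l₁) (h₂ : IsCoupling ν ρ l₂) :
    IsCoupling μ ρ fun x z => ∑ y, gluedPlan l₁ l₂ ν x y z := by
  refine ⟨fun x z => sum_nonneg fun y _ => h₁.gluedPlan_nonneg h₂ x y z, fun x => ?_, fun z => ?_⟩
  · rw [sum_comm]
    simp only [h₁.sum_gluedPlan_right h₂, h₁.2.1]
  · rw [sum_comm]
    simp only [h₁.sum_gluedPlan_left h₂, h₂.2.2]

theorem transportCost_comp_le (h₁ : IsCoupling μ ν l₁) (h₂ : IsCoupling ν ρ l₂)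
    (hd : ∀ x y z, d x z ≤ d x y + d y z) :
    transportCost (fun x z => ∑ y, gluedPlan l₁ l₂ ν x y z) d ≤
      transportCost l₁ d + transportCost l₂ d := by
  set t := gluedPlan l₁ l₂ ν
  calc transportCost (fun x z => ∑ y, t x y z) d
      = ∑ x, ∑ z, ∑ y, t x y z * d x z := by simp only [transportCost, sum_mul]
    _ ≤ ∑ x, ∑ z, ∑ y, (t x y z * d x y + t x y z * d y z) := by
        gcongr with x _ z _ y _
        rw [← mul_add]
        exact mul_le_mul_of_nonneg_left (hd x y z) (h₁.gluedPlan_nonneg h₂ x y z)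
    _ = ∑ x, ∑ y, ∑ z, t x y z * d x y + ∑ y, ∑ z, ∑ x, t x y z * d y z := by
        simp only [sum_add_distrib]
        congr 1
        · exact sum_congr rfl fun x _ => sum_comm
        · exact (sum_comm.trans (sum_congr rfl fun z _ => sum_comm)).trans sum_comm
    _ = transportCost l₁ d + transportCost l₂ d := by
        simp only [t, ← sum_mul, h₁.sum_gluedPlan_right h₂, h₁.sum_gluedPlan_left h₂,
          transportCost]

end IsCoupling

theorem W1_le_transportCost (hd : ∀ x y, 0 ≤ d x y) (hl : IsCoupling μ ν l) :
    W1 d μ ν ≤ transportCost l d :=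
  csInf_le ⟨0, fun _ ⟨_, hl', hc⟩ => hc ▸ transportCost_nonneg hl'.1 hd⟩ ⟨l, hl, rfl⟩

theorem le_W1 {b : ℝ} (hne : ∃ l, IsCoupling μ ν l)
    (hb : ∀ l, IsCoupling μ ν l → b ≤ transportCost l d) : b ≤ W1 d μ ν := by
  obtain ⟨l, hl⟩ := hne
  exact le_csInf ⟨_, l, hl, rfl⟩ fun _ ⟨l', hl', hc⟩ => hc ▸ hb l' hl'

theorem W1_self (hd : ∀ x y, 0 ≤ d x y) (hd₀ : ∀ x, d x x = 0) (hμ0 : ∀ x, 0 ≤ μ x) :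
    W1 d μ μ = 0 := by
  classical
  exact IsLeast.csInf_eq ⟨⟨_, isCoupling_diag hμ0, (transportCost_diag hd₀).symm⟩,
    fun _ ⟨l, hl, hc⟩ => hc ▸ transportCost_nonneg hl.1 hd⟩

theorem W1_comm (hd : ∀ x y, d x y = d y x) (μ ν : S → ℝ) : W1 d μ ν = W1 d ν μ := by
  refine congrArg sInf (Set.ext fun c => ⟨?_, ?_⟩) <;>
    exact fun ⟨l, hl, hc⟩ => ⟨_, hl.symm, hc.trans (transportCost_swap hd).symm⟩

theorem W1_le_W1_add {K : ℝ} (hμ0 : ∀ x, 0 ≤ μ x) (hμ1 : ∑ x, μ x = 1)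
    (hν0 : ∀ y, 0 ≤ ν y) (hν1 : ∑ y, ν y = 1) (hd' : ∀ x y, 0 ≤ d' x y)
    (hK : ∀ x y, d' x y ≤ d x y + K) : W1 d' μ ν ≤ W1 d μ ν + K := by
  suffices W1 d' μ ν - K ≤ W1 d μ ν by linarith
  refine le_W1 ⟨_, isCoupling_prod hμ0 hμ1 hν0 hν1⟩ fun l hl => ?_
  have := (W1_le_transportCost hd' hl).trans (transportCost_mono hl.1 hK)
  rw [hl.transportCost_add_const hμ1] at this
  linarith

theorem abs_W1_sub_W1_le {K : ℝ} (hμ0 : ∀ x, 0 ≤ μ x) (hμ1 : ∑ x, μ x = 1)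
    (hν0 : ∀ y, 0 ≤ ν y) (hν1 : ∑ y, ν y = 1) (hd : ∀ x y, 0 ≤ d x y)
    (hd' : ∀ x y, 0 ≤ d' x y) (hK : ∀ x y, |d x y - d' x y| ≤ K) :
    |W1 d μ ν - W1 d' μ ν| ≤ K := by
  rw [abs_sub_le_iff]
  constructor
  · linarith [W1_le_W1_add (d := d') (K := K) hμ0 hμ1 hν0 hν1 hd fun x y => by
      linarith [(abs_le.1 (hK x y)).2]]
  · linarith [W1_le_W1_add (d := d) (K := K) hμ0 hμ1 hν0 hν1 hd' fun x y => by
      linarith [(abs_le.1 (hK x y)).1]]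

theorem W1_triangle (hd : ∀ x y, 0 ≤ d x y) (htri : ∀ x y z, d x z ≤ d x y + d y z)
    (hμ0 : ∀ x, 0 ≤ μ x) (hμ1 : ∑ x, μ x = 1) (hν0 : ∀ y, 0 ≤ ν y) (hν1 : ∑ y, ν y = 1)
    (hρ0 : ∀ z, 0 ≤ ρ z) (hρ1 : ∑ z, ρ z = 1) :
    W1 d μ ρ ≤ W1 d μ ν + W1 d ν ρ := by
  have hglue : ∀ l₁ l₂, IsCoupling μ ν l₁ → IsCoupling ν ρ l₂ →
      W1 d μ ρ ≤ transportCost l₁ d + transportCost l₂ d := fun l₁ l₂ h₁ h₂ =>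
    (W1_le_transportCost hd (h₁.comp h₂)).trans (h₁.transportCost_comp_le h₂ htri)
  have hinf₁ : ∀ l₂, IsCoupling ν ρ l₂ → W1 d μ ρ - transportCost l₂ d ≤ W1 d μ ν :=
    fun l₂ h₂ => le_W1 ⟨_, isCoupling_prod hμ0 hμ1 hν0 hν1⟩ fun l₁ h₁ => by
      linarith [hglue l₁ l₂ h₁ h₂]
  have hinf₂ : W1 d μ ρ - W1 d μ ν ≤ W1 d ν ρ :=
    le_W1 ⟨_, isCoupling_prod hν0 hν1 hρ0 hρ1⟩ fun l₂ h₂ => by linarith [hinf₁ l₂ h₂]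
  linarith

end Coupling

theorem IsPseudometric.nonneg {S : Type*} {d : S → S → ℝ} (hd : IsPseudometric d) (x y : S) :
    0 ≤ d x y := by
  have := hd.2.2 x y x
  rw [hd.1 x, hd.2.1 y x] at this
  linarith

theorem isPseudometric_zero {S : Type*} : IsPseudometric (0 : S → S → ℝ) :=
  ⟨fun _ => rfl, fun _ _ => rfl, fun _ _ _ => by simp⟩

theorem isClosed_setOf_isPseudometric (S : Type*) [Fintype S] :
    IsClosed {d : S → S → ℝ | IsPseudometric d} := by
  simp only [IsPseudometric, Set.ofPred_and, Set.ofPred_forall]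
  refine .inter (isClosed_iInter fun x => isClosed_eq (by fun_prop) (by fun_prop))
    (.inter (isClosed_iInter fun x => isClosed_iInter fun y =>
      isClosed_eq (by fun_prop) (by fun_prop))
      (isClosed_iInter fun x => isClosed_iInter fun y => isClosed_iInter fun z =>
        isClosed_le (by fun_prop) (by fun_prop)))

section Bisimulation

variable {S A : Type*} [Fintype A] {π : S → A → ℝ} {R : S → A → ℝ} {P : S → A → S → ℝ}
  {c : ℝ} {d d' : S → S → ℝ}

theorem Ppi_nonneg (hπ0 : ∀ s a, 0 ≤ π s a) (hP0 : ∀ s a s', 0 ≤ P s a s') (s s' : S) :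
    0 ≤ Ppi π P s s' :=
  sum_nonneg fun a _ => mul_nonneg (hπ0 s a) (hP0 s a s')

variable [Fintype S]

theorem sum_Ppi (hπ1 : ∀ s, ∑ a, π s a = 1) (hP1 : ∀ s a, ∑ s', P s a s' = 1) (s : S) :
    ∑ s', Ppi π P s s' = 1 := by
  simp only [Ppi]
  rw [sum_comm]
  simp only [← mul_sum, hP1, mul_one, hπ1]

theorem isPseudometric_bisimOp (hπ0 : ∀ s a, 0 ≤ π s a) (hπ1 : ∀ s, ∑ a, π s a = 1)
    (hP0 : ∀ s a s', 0 ≤ P s a s') (hP1 : ∀ s a, ∑ s', P s a s' = 1)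
    (hc0 : 0 ≤ c) (hc1 : c ≤ 1) (hd : IsPseudometric d) :
    IsPseudometric (bisimOp π R P c d) := by
  have h0 := Ppi_nonneg hπ0 hP0
  have h1 := sum_Ppi hπ1 hP1
  refine ⟨fun x => ?_, fun x y => ?_, fun x y z => ?_⟩
  · simp [bisimOp, W1_self hd.nonneg hd.1 (h0 x)]
  · rw [bisimOp, bisimOp, abs_sub_comm, W1_comm hd.2.1]
  · have hR := abs_sub_le (Rpi π R x) (Rpi π R y) (Rpi π R z)
    have hW := W1_triangle hd.nonneg hd.2.2 (h0 x) (h1 x) (h0 y) (h1 y) (h0 z) (h1 z)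
    simp only [bisimOp]
    linarith [mul_le_mul_of_nonneg_left hR (sub_nonneg.2 hc1), mul_le_mul_of_nonneg_left hW hc0]

theorem abs_bisimOp_sub_le (hπ0 : ∀ s a, 0 ≤ π s a) (hπ1 : ∀ s, ∑ a, π s a = 1)
    (hP0 : ∀ s a s', 0 ≤ P s a s') (hP1 : ∀ s a, ∑ s', P s a s' = 1) (hc0 : 0 ≤ c)
    (hd : IsPseudometric d) (hd' : IsPseudometric d') {K : ℝ}
    (hK : ∀ x y, |d x y - d' x y| ≤ K) (si sj : S) :
    |bisimOp π R P c d si sj - bisimOp π R P c d' si sj| ≤ c * K := by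
  have h0 := Ppi_nonneg hπ0 hP0
  have h1 := sum_Ppi hπ1 hP1
  have hW := abs_W1_sub_W1_le (h0 si) (h1 si) (h0 sj) (h1 sj) hd.nonneg hd'.nonneg hK
  rw [bisimOp, bisimOp, add_sub_add_left_eq_sub, ← mul_sub, abs_mul, abs_of_nonneg hc0]
  exact mul_le_mul_of_nonneg_left hW hc0

theorem lipschitzOnWith_bisimOp (hπ0 : ∀ s a, 0 ≤ π s a) (hπ1 : ∀ s, ∑ a, π s a = 1)
    (hP0 : ∀ s a s', 0 ≤ P s a s') (hP1 : ∀ s a, ∑ s', P s a s' = 1) (hc0 : 0 ≤ c) :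
    LipschitzOnWith ⟨c, hc0⟩ (bisimOp π R P c) {d | IsPseudometric d} := by
  refine LipschitzOnWith.of_dist_le_mul fun d hd d' hd' => ?_
  refine (dist_pi_le_iff (by positivity)).2 fun si =>
    (dist_pi_le_iff (by positivity)).2 fun sj => ?_
  refine abs_bisimOp_sub_le hπ0 hπ1 hP0 hP1 hc0 hd hd' (fun x y => ?_) si sj
  exact (dist_le_pi_dist (d x) (d' x) y).trans (dist_le_pi_dist d d' x)

end Bisimulation

theorem bisimOp_contraction_unique_fixed_point_general {S A : Type*}
    [Fintype S] [Fintype A]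
    (P : S → A → S → ℝ) (R : S → A → ℝ) (π : S → A → ℝ)
    (hπ0 : ∀ s a, 0 ≤ π s a) (hπ1 : ∀ s, ∑ a, π s a = 1)
    (hP0 : ∀ s a s', 0 ≤ P s a s') (hP1 : ∀ s a, ∑ s', P s a s' = 1)
    (c : ℝ) (hc0 : 0 < c) (hc1 : c < 1) :
    (∀ d d' : S → S → ℝ, IsPseudometric d → IsPseudometric d' → ∀ si sj : S,
        |bisimOp π R P c d si sj - bisimOp π R P c d' si sj|
          ≤ c * ⨆ p : S × S, |d p.1 p.2 - d' p.1 p.2|) ∧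
    (∃! d : S → S → ℝ, IsPseudometric d ∧
        ∀ si sj : S, bisimOp π R P c d si sj = d si sj) := by
  refine ⟨fun d d' hd hd' => abs_bisimOp_sub_le hπ0 hπ1 hP0 hP1 hc0.le hd hd' fun x y =>
    le_ciSup (f := fun p : S × S => |d p.1 p.2 - d' p.1 p.2|) (finite_range _).bddAbove (x, y), ?_⟩
  have hfix := existsUnique_isFixedPt_of_lipschitzOnWith (f := bisimOp π R P c)
    (K := ⟨c, hc0.le⟩) hc1
    (isClosed_setOf_isPseudometric S).isComplete ⟨0, isPseudometric_zero⟩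
    (fun _ => isPseudometric_bisimOp hπ0 hπ1 hP0 hP1 hc0.le hc1.le)
    (lipschitzOnWith_bisimOp hπ0 hπ1 hP0 hP1 hc0.le)
  simpa only [mem_ofPred_eq, IsFixedPt, funext_iff] using hfix

/-- On a finite nonempty state space, the bisimulation operator `F` is a
contraction with Lipschitz constant `c` with respect to the sup-norm on
(bounded) pseudometrics, and hence it has a unique fixed point. -/
theorem bisimOp_contraction_unique_fixed_point {S A : Type*}
    [Fintype S] [Nonempty S] [Fintype A]
    (P : S → A → S → ℝ) (R : S → A → ℝ) (π : S → A → ℝ)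
    (hπ0 : ∀ s a, 0 ≤ π s a) (hπ1 : ∀ s, ∑ a, π s a = 1)
    (hP0 : ∀ s a s', 0 ≤ P s a s') (hP1 : ∀ s a, ∑ s', P s a s' = 1)
    (hRbd : ∃ C, ∀ s a, |R s a| ≤ C)
    (c : ℝ) (hc0 : 0 < c) (hc1 : c < 1) :
    (∀ d d' : S → S → ℝ, IsPseudometric d → IsPseudometric d' → ∀ si sj : S,
        |bisimOp π R P c d si sj - bisimOp π R P c d' si sj|
          ≤ c * ⨆ p : S × S, |d p.1 p.2 - d' p.1 p.2|) ∧
    (∃! d : S → S → ℝ, IsPseudometric d ∧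
        ∀ si sj : S, bisimOp π R P c d si sj = d si sj) :=
  bisimOp_contraction_unique_fixed_point_general P R π hπ0 hπ1 hP0 hP1 c hc0 hc1
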